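/- (Second order estimate with an independent shift.) Let F : ℝ → ℝ be continuously differentiable with L-Lipschitz derivative F′. Let X be a real random variable with P(X ∈ [a,b]) = 1, let Λ be uniformly distributed on [0,1] and independent of X, and let Z be a square-integrable real random variable independent of the pair (X, Λ). Then for every grid Γ in [a,b]: |E F(X + Z) − E F(J_Γ(X,Λ) + Z)| ≤ L · E|X − J_Γ(X,Λ)|². -/

import Mathlib

open MeasureTheory ProbabilityTheory

/-- Index `j*(ξ)` of the segment `[x_j, x_{j+1})` of the grid containing `ξ`
(with default value `N`, corresponding to the closed last segment). -/
noncomputable def jstar (N : ℕ) (x : ℕ → ℝ) (ξ : ℝ) : ℕ :=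
  if h : ∃ j, j ≤ N ∧ x j ≤ ξ ∧ ξ < x (j + 1) then h.choose else N

/-- The dual quantization operator `J_Γ(ξ, λ)` associated with the grid
`x 0 ≤ x 1 ≤ … ≤ x (N+1)`. -/
noncomputable def dualQ (N : ℕ) (x : ℕ → ℝ) (ξ lam : ℝ) : ℝ :=
  if x (jstar N x ξ + 1) = x (jstar N x ξ) then ξ
  else if lam < (x (jstar N x ξ + 1) - ξ) / (x (jstar N x ξ + 1) - x (jstar N x ξ)) then
    x (jstar N x ξ)
  else x (jstar N x ξ + 1)

/-! Given `X = ξ ∈ [x_j, x_{j+1}]`, the value `J_Γ(ξ, Λ)` is one of the two neighbouring grid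
points, chosen with the weights that interpolate `ξ` linearly; hence `E[J_Γ(ξ, Λ)] = ξ`. Since `Λ`
is independent of `(X, Z)`, integrating over `Λ` first kills the first-order term
`E[F'(X + Z) (J_Γ(X, Λ) - X)]` of the Taylor expansion of `F` at `X + Z`, and the remainder is at
most `L |J_Γ(X, Λ) - X|²` by the mean value theorem applied to `F'`. -/

open Set

lemma measurable_dite_exists_choose {α : Type*} [MeasurableSpace α] {p : ℕ → α → Prop}
    [∀ a, Decidable (∃ j, p j a)] (hp : ∀ j, MeasurableSet {a | p j a})
    (huniq : ∀ a i j, p i a → p j a → i = j) (d : ℕ) :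
    Measurable fun a => if h : ∃ j, p j a then h.choose else d := by
  refine measurable_to_countable' fun j => ?_
  have hpre : (fun a => if h : ∃ j, p j a then h.choose else d) ⁻¹' {j} =
      {a | p j a} ∪ ({_a | d = j} \ ⋃ i, {a | p i a}) := by
    ext a
    by_cases h : ∃ i, p i a
    · simp only [mem_preimage, mem_singleton_iff, dif_pos h, mem_union, mem_ofPred_eq,
        mem_sdiff, mem_iUnion]
      refine ⟨fun hj => Or.inl (hj ▸ h.choose_spec), ?_⟩
      rintro (hj | ⟨-, hno⟩)
      · exact huniq a _ _ h.choose_spec hj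
      · exact absurd h hno
    · push Not at h
      simp [h]
  rw [hpre]
  exact (hp j).union ((MeasurableSet.const _).diff (.iUnion hp))

section Grid

variable {N : ℕ} {x : ℕ → ℝ} {a b ξ : ℝ}

lemma grid_le_grid (hmono : ∀ j ≤ N, x j ≤ x (j + 1)) {i j : ℕ} (hij : i ≤ j) (hj : j ≤ N + 1) :
    x i ≤ x j := by
  induction j, hij using Nat.le_induction with
  | base => exact le_rfl
  | succ k _ ih => exact (ih (by omega)).trans (hmono k (by omega))

lemma jstar_le : jstar N x ξ ≤ N := by
  unfold jstar
  split_ifs with h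
  exacts [h.choose_spec.1, le_rfl]

lemma measurable_jstar (hmono : ∀ j ≤ N, x j ≤ x (j + 1)) : Measurable (jstar N x) := by
  refine measurable_dite_exists_choose (fun j => by measurability) ?_ N
  rintro ξ i j ⟨hiN, hi, hξi⟩ ⟨hjN, hj, hξj⟩
  by_contra hne
  rcases Nat.lt_or_gt_of_ne hne with hlt | hlt <;>
    linarith [grid_le_grid hmono (Nat.succ_le_of_lt hlt) (by omega)]

lemma mem_Icc_jstar (hx0 : x 0 = a) (hxN : x (N + 1) = b) (hξ : ξ ∈ Icc a b) :
    ξ ∈ Icc (x (jstar N x ξ)) (x (jstar N x ξ + 1)) := by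
  unfold jstar
  split_ifs with h
  · exact ⟨h.choose_spec.2.1, h.choose_spec.2.2.le⟩
  · push Not at h
    -- Without a bracketing segment, the grid points lie below `ξ` one after the other.
    have hle : ∀ i ≤ N + 1, x i ≤ ξ := by
      intro i hi
      induction i with
      | zero => exact hx0 ▸ hξ.1
      | succ i ih => exact h i (by omega) (ih (by omega))
    exact ⟨hle N (by omega), hxN ▸ hξ.2⟩

lemma measurable_dualQ (hmono : ∀ j ≤ N, x j ≤ x (j + 1)) :
    Measurable fun p : ℝ × ℝ => dualQ N x p.1 p.2 := by
  have hseg : Measurable fun q : (ℝ × ℝ) × ℕ =>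
      if x (q.2 + 1) = x q.2 then q.1.1
      else if q.1.2 < (x (q.2 + 1) - q.1.1) / (x (q.2 + 1) - x q.2) then x q.2
      else x (q.2 + 1) :=
    measurable_from_prod_countable_left fun j =>
      Measurable.ite (.const (x (j + 1) = x j)) measurable_fst
        (Measurable.ite (measurableSet_lt measurable_snd (by fun_prop)) (by fun_prop)
          (by fun_prop))
  exact hseg.comp (measurable_id.prodMk ((measurable_jstar hmono).comp measurable_fst))

lemma dualQ_mem_Icc (hmono : ∀ j ≤ N, x j ≤ x (j + 1)) (hx0 : x 0 = a) (hxN : x (N + 1) = b)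
    (hξ : ξ ∈ Icc a b) (lam : ℝ) : dualQ N x ξ lam ∈ Icc a b := by
  have hj := jstar_le (N := N) (x := x) (ξ := ξ)
  have hlo : a ≤ x (jstar N x ξ) := hx0 ▸ grid_le_grid hmono (Nat.zero_le _) (by omega)
  have hhi : x (jstar N x ξ + 1) ≤ b := hxN ▸ grid_le_grid hmono (by omega) le_rfl
  have hbr := mem_Icc_jstar hx0 hxN hξ
  unfold dualQ
  split_ifs
  exacts [hξ, ⟨hlo, hbr.1.trans (hbr.2.trans hhi)⟩, ⟨hlo.trans (hbr.1.trans hbr.2), hhi⟩]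

lemma setIntegral_Icc_ite_lt {p : ℝ} (hp : p ∈ Icc (0 : ℝ) 1) (c d : ℝ) :
    ∫ lam in Icc (0 : ℝ) 1, (if lam < p then c else d) = p * c + (1 - p) * d := by
  have hind : (fun lam : ℝ => if lam < p then c else d) =
      fun lam => (Iio p).indicator (fun _ => c - d) lam + d := by
    funext lam
    by_cases h : lam < p <;> simp [h]
  have hset : Iio p ∩ Icc (0 : ℝ) 1 = Ico 0 p := by
    ext t
    simp only [mem_inter_iff, mem_Iio, mem_Icc, mem_Ico]
    constructor
    · rintro ⟨h1, h2, _⟩; exact ⟨h2, h1⟩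
    · rintro ⟨h1, h2⟩; exact ⟨h2, h1, h2.le.trans hp.2⟩
  rw [hind, integral_add ((integrable_const _).indicator measurableSet_Iio) (integrable_const d),
    integral_indicator_const _ measurableSet_Iio, measureReal_restrict_apply measurableSet_Iio,
    hset, Real.volume_real_Ico, integral_const, measureReal_restrict_apply_univ,
    Real.volume_real_Icc]
  simp only [sub_zero, max_eq_left hp.1, max_eq_left zero_le_one, smul_eq_mul]
  ring

lemma setIntegral_dualQ_sub_self (hx0 : x 0 = a) (hxN : x (N + 1) = b) (hξ : ξ ∈ Icc a b) :
    ∫ lam in Icc (0 : ℝ) 1, (dualQ N x ξ lam - ξ) = 0 := by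
  obtain ⟨hlo, hhi⟩ := mem_Icc_jstar hx0 hxN hξ
  unfold dualQ
  set j := jstar N x ξ
  by_cases hdeg : x (j + 1) = x j
  · simp only [hdeg, if_true, sub_self, integral_zero]
  have hpos : 0 < x (j + 1) - x j := by
    rcases hlo.eq_or_lt with h | h <;> [skip; linarith]
    exact sub_pos.2 (lt_of_le_of_ne (h ▸ hhi) (Ne.symm hdeg))
  have hp : (x (j + 1) - ξ) / (x (j + 1) - x j) ∈ Icc (0 : ℝ) 1 :=
    ⟨div_nonneg (by linarith) hpos.le, (div_le_one hpos).2 (by linarith)⟩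
  simp only [hdeg, if_false, ite_sub]
  rw [setIntegral_Icc_ite_lt hp]
  field_simp
  ring

lemma integral_prod_mul_dualQ_sub_eq_zero (hx0 : x 0 = a) (hxN : x (N + 1) = b)
    {μ : Measure ℝ} [SFinite μ] (hμ : ∀ᵐ ξ ∂μ, ξ ∈ Icc a b) (ψ : ℝ → ℝ) :
    ∫ p, ψ p.1 * (dualQ N x p.1 p.2 - p.1) ∂(μ.prod (volume.restrict (Icc (0 : ℝ) 1))) = 0 := by
  -- A non-integrable function has integral `0` by convention, so only the integrable case is real.
  by_cases hint : Integrable (fun p : ℝ × ℝ => ψ p.1 * (dualQ N x p.1 p.2 - p.1))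
      (μ.prod (volume.restrict (Icc (0 : ℝ) 1)))
  · rw [integral_prod _ hint]
    refine integral_eq_zero_of_ae ?_
    filter_upwards [hμ] with ξ hξ
    rw [integral_const_mul, setIntegral_dualQ_sub_self hx0 hxN hξ, mul_zero, Pi.zero_apply]
  · exact integral_undef hint

end Grid

lemma map_prodMk_prodMk_eq_prod_prod {Ω α β γ : Type*} [MeasurableSpace Ω] [MeasurableSpace α]
    [MeasurableSpace β] [MeasurableSpace γ] {P : Measure Ω} [IsFiniteMeasure P]
    {U : Ω → α} {V : Ω → β} {W : Ω → γ} (hU : Measurable U) (hV : Measurable V)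
    (hW : Measurable W) (hUV : IndepFun U V P) (hUVW : IndepFun (fun ω => (U ω, V ω)) W P) :
    P.map (fun ω => ((U ω, V ω), W ω)) = ((P.map U).prod (P.map V)).prod (P.map W) := by
  rw [(indepFun_iff_map_prod_eq_prod_map_map (hU.prodMk hV).aemeasurable hW.aemeasurable).1 hUVW,
    (indepFun_iff_map_prod_eq_prod_map_map hU.aemeasurable hV.aemeasurable).1 hUV]

lemma integral_mul_dualQ_sub_eq_zero {Ω : Type*} [MeasurableSpace Ω] {P : Measure Ω}
    [IsFiniteMeasure P] {N : ℕ} {x : ℕ → ℝ} {a b : ℝ}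
    (hmono : ∀ j ≤ N, x j ≤ x (j + 1)) (hx0 : x 0 = a) (hxN : x (N + 1) = b)
    {X Λ Z : Ω → ℝ} (hXmeas : Measurable X) (hXab : ∀ᵐ ω ∂P, X ω ∈ Icc a b)
    (hΛmeas : Measurable Λ) (hΛ : P.map Λ = volume.restrict (Icc (0 : ℝ) 1))
    (hindepXΛ : IndepFun X Λ P) (hZmeas : Measurable Z)
    (hindepZ : IndepFun (fun ω => (X ω, Λ ω)) Z P) {φ : ℝ × ℝ → ℝ} (hφ : Measurable φ) :
    ∫ ω, φ (X ω, Z ω) * (dualQ N x (X ω) (Λ ω) - X ω) ∂P = 0 := by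
  set g : (ℝ × ℝ) × ℝ → ℝ := fun q => φ (q.1.1, q.2) * (dualQ N x q.1.1 q.1.2 - q.1.1)
  have hg : Measurable g :=
    (hφ.comp (by fun_prop)).mul (((measurable_dualQ hmono).comp measurable_fst).sub (by fun_prop))
  have hlaw := map_prodMk_prodMk_eq_prod_prod hXmeas hΛmeas hZmeas hindepXΛ hindepZ
  rw [hΛ] at hlaw
  have hXab' : ∀ᵐ ξ ∂P.map X, ξ ∈ Icc a b :=
    (ae_map_iff hXmeas.aemeasurable measurableSet_Icc).2 hXab
  calc ∫ ω, φ (X ω, Z ω) * (dualQ N x (X ω) (Λ ω) - X ω) ∂P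
      = ∫ q, g q ∂(P.map fun ω => ((X ω, Λ ω), Z ω)) :=
        (integral_map ((hXmeas.prodMk hΛmeas).prodMk hZmeas).aemeasurable
          hg.aestronglyMeasurable).symm
    _ = 0 := by
      rw [hlaw]
      by_cases hint :
          Integrable g (((P.map X).prod (volume.restrict (Icc (0 : ℝ) 1))).prod (P.map Z))
      · rw [integral_prod_symm g hint]
        exact integral_eq_zero_of_ae (ae_of_all _ fun z =>
          integral_prod_mul_dualQ_sub_eq_zero hx0 hxN hXab' fun ξ => φ (ξ, z))
      · exact integral_undef hint

lemma abs_sub_sub_deriv_mul_le {F : ℝ → ℝ} {L : NNReal} (hF : Differentiable ℝ F)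
    (hFlip : LipschitzWith L (deriv F)) (u v : ℝ) :
    |F v - F u - deriv F u * (v - u)| ≤ L * (v - u) ^ 2 := by
  have hderiv : ∀ t, HasDerivAt (fun s => F s - deriv F u * s) (deriv F t - deriv F u) t :=
    fun t => by simpa using (hF t).hasDerivAt.fun_sub ((hasDerivAt_id' t).const_mul (deriv F u))
  have hbound : ∀ t ∈ uIcc u v, ‖deriv F t - deriv F u‖ ≤ L * |v - u| := fun t ht =>
    (hFlip.dist_le_mul t u).trans (mul_le_mul_of_nonneg_left (abs_sub_left_of_mem_uIcc ht) L.2)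
  have := (convex_uIcc u v).norm_image_sub_le_of_norm_hasDerivWithin_le
    (fun t _ => (hderiv t).hasDerivWithinAt) hbound left_mem_uIcc right_mem_uIcc
  rw [Real.norm_eq_abs, Real.norm_eq_abs, mul_assoc, ← sq, sq_abs] at this
  convert this using 2
  ring

lemma integrable_comp_of_memLp_two {Ω : Type*} [MeasurableSpace Ω] {P : Measure Ω}
    [IsFiniteMeasure P] {F : ℝ → ℝ} {L : NNReal} (hF : Differentiable ℝ F)
    (hFlip : LipschitzWith L (deriv F)) {W : Ω → ℝ} (hW : MemLp W 2 P) :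
    Integrable (fun ω => F (W ω)) P := by
  refine Integrable.mono' (((integrable_const |F 0|).add
      ((hW.integrable one_le_two).abs.const_mul |deriv F 0|)).add (hW.integrable_sq.const_mul L))
    (hF.continuous.comp_aestronglyMeasurable hW.1) (ae_of_all _ fun ω => ?_)
  have htaylor := abs_le.1 (abs_sub_sub_deriv_mul_le hF hFlip 0 (W ω))
  simp only [sub_zero] at htaylor
  have h0 := abs_le.1 (le_refl |F 0|)
  have h1 := abs_le.1 (abs_mul (deriv F 0) (W ω)).le
  rw [Real.norm_eq_abs, abs_le]
  constructor <;> simp only [Pi.add_apply] <;> linarith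

lemma abs_integral_sub_integral_le_of_integral_deriv_mul_eq_zero {Ω : Type*} [MeasurableSpace Ω]
    {P : Measure Ω} [IsFiniteMeasure P] {F : ℝ → ℝ} {L : NNReal} (hF : Differentiable ℝ F)
    (hFlip : LipschitzWith L (deriv F)) {U V : Ω → ℝ} (hU : MemLp U 2 P) (hV : MemLp V 2 P)
    (hfirst : ∫ ω, deriv F (U ω) * (V ω - U ω) ∂P = 0) :
    |∫ ω, F (U ω) ∂P - ∫ ω, F (V ω) ∂P| ≤ L * ∫ ω, |U ω - V ω| ^ 2 ∂P := by
  set R := fun ω => F (V ω) - F (U ω) - deriv F (U ω) * (V ω - U ω)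
  have hFU := integrable_comp_of_memLp_two hF hFlip hU
  have hFV := integrable_comp_of_memLp_two hF hFlip hV
  have hRle : ∀ ω, |R ω| ≤ L * |U ω - V ω| ^ 2 := fun ω => by
    rw [sq_abs, ← neg_sub, neg_sq]
    exact abs_sub_sub_deriv_mul_le hF hFlip (U ω) (V ω)
  have hsq : Integrable (fun ω => L * |U ω - V ω| ^ 2) P := by
    simpa only [sq_abs, Pi.sub_apply] using ((hU.sub hV).integrable_sq).const_mul (L : ℝ)
  have hR : Integrable R P := hsq.mono'
    ((hFV.sub hFU).1.sub ((hFlip.continuous.comp_aestronglyMeasurable hU.1).mul (hV.1.sub hU.1)))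
    (ae_of_all _ hRle)
  have hlin : Integrable (fun ω => deriv F (U ω) * (V ω - U ω)) P :=
    ((hFV.sub hFU).sub hR).congr (ae_of_all _ fun ω => by simp only [R, Pi.sub_apply]; ring)
  have hsplit : ∫ ω, F (V ω) ∂P - ∫ ω, F (U ω) ∂P = ∫ ω, R ω ∂P := by
    rw [← integral_sub hFV hFU, integral_sub (f := fun ω => F (V ω) - F (U ω)) (hFV.sub hFU) hlin,
      hfirst, sub_zero]
  calc |∫ ω, F (U ω) ∂P - ∫ ω, F (V ω) ∂P| = |∫ ω, R ω ∂P| := by rw [abs_sub_comm, hsplit]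
    _ ≤ ∫ ω, |R ω| ∂P := abs_integral_le_integral_abs
    _ ≤ ∫ ω, L * |U ω - V ω| ^ 2 ∂P := integral_mono hR.abs hsq hRle
    _ = L * ∫ ω, |U ω - V ω| ^ 2 ∂P := integral_const_mul _ _

theorem dualQ_second_order_shift_general {Ω : Type*} [MeasurableSpace Ω] (P : Measure Ω)
    [IsProbabilityMeasure P]
    (a b : ℝ) (N : ℕ) (x : ℕ → ℝ)
    (hmono : ∀ j ≤ N, x j ≤ x (j + 1)) (hx0 : x 0 = a) (hxN : x (N + 1) = b)
    (X : Ω → ℝ) (hXmeas : Measurable X) (hXab : ∀ᵐ ω ∂P, X ω ∈ Set.Icc a b)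
    (Λ : Ω → ℝ) (hΛmeas : Measurable Λ)
    (hΛ : Measure.map Λ P = volume.restrict (Set.Icc (0 : ℝ) 1))
    (hindepXΛ : IndepFun X Λ P)
    (Z : Ω → ℝ) (hZmeas : Measurable Z) (hZ2 : Integrable (fun ω => (Z ω) ^ 2) P)
    (hindepZ : IndepFun (fun ω => (X ω, Λ ω)) Z P)
    (F : ℝ → ℝ) (L : NNReal) (hF : ContDiff ℝ 1 F) (hFlip : LipschitzWith L (deriv F)) :
    |∫ ω, F (X ω + Z ω) ∂P - ∫ ω, F (dualQ N x (X ω) (Λ ω) + Z ω) ∂P| ≤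
      (L : ℝ) * ∫ ω, |X ω - dualQ N x (X ω) (Λ ω)| ^ 2 ∂P := by
  have hYmeas : Measurable fun ω => dualQ N x (X ω) (Λ ω) :=
    (measurable_dualQ hmono).comp (hXmeas.prodMk hΛmeas)
  have hYab : ∀ᵐ ω ∂P, dualQ N x (X ω) (Λ ω) ∈ Icc a b :=
    hXab.mono fun ω hω => dualQ_mem_Icc hmono hx0 hxN hω _
  have hZ : MemLp Z 2 P := (memLp_two_iff_integrable_sq hZmeas.aestronglyMeasurable).2 hZ2
  have hfirst : ∫ ω, deriv F (X ω + Z ω) *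
      ((dualQ N x (X ω) (Λ ω) + Z ω) - (X ω + Z ω)) ∂P = 0 := by
    simpa only [add_sub_add_right_eq_sub] using
      integral_mul_dualQ_sub_eq_zero hmono hx0 hxN hXmeas hXab hΛmeas hΛ hindepXΛ hZmeas hindepZ
        (φ := fun p => deriv F (p.1 + p.2)) (hFlip.continuous.measurable.comp (by fun_prop))
  simpa only [Pi.add_apply, add_sub_add_right_eq_sub] using
    abs_integral_sub_integral_le_of_integral_deriv_mul_eq_zero (hF.differentiable one_ne_zero)
      hFlip ((memLp_of_bounded hXab hXmeas.aestronglyMeasurable 2).add hZ)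
      ((memLp_of_bounded hYab hYmeas.aestronglyMeasurable 2).add hZ) hfirst

/-- **Second order estimate with an independent shift.** Let `F : ℝ → ℝ` be
continuously differentiable with `L`-Lipschitz derivative. Let `X` be a real random variable
with `P(X ∈ [a,b]) = 1`, let `Λ` be uniformly distributed on `[0,1]` and independent of `X`,
and let `Z` be a square-integrable real random variable independent of the pair `(X, Λ)`.
Then for every grid `Γ` in `[a,b]`:
`|E F(X + Z) − E F(J_Γ(X,Λ) + Z)| ≤ L · E|X − J_Γ(X,Λ)|²`. -/
theorem dualQ_second_order_shift {Ω : Type*} [MeasurableSpace Ω] (P : Measure Ω)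
    [IsProbabilityMeasure P]
    (a b : ℝ) (hab : a < b) (N : ℕ) (x : ℕ → ℝ)
    (hmono : ∀ j ≤ N, x j ≤ x (j + 1)) (hx0 : x 0 = a) (hxN : x (N + 1) = b)
    (X : Ω → ℝ) (hXmeas : Measurable X) (hXab : ∀ᵐ ω ∂P, X ω ∈ Set.Icc a b)
    (Λ : Ω → ℝ) (hΛmeas : Measurable Λ)
    (hΛ : Measure.map Λ P = volume.restrict (Set.Icc (0 : ℝ) 1))
    (hindepXΛ : IndepFun X Λ P)
    (Z : Ω → ℝ) (hZmeas : Measurable Z) (hZ2 : Integrable (fun ω => (Z ω) ^ 2) P)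
    (hindepZ : IndepFun (fun ω => (X ω, Λ ω)) Z P)
    (F : ℝ → ℝ) (L : NNReal) (hF : ContDiff ℝ 1 F) (hFlip : LipschitzWith L (deriv F)) :
    |∫ ω, F (X ω + Z ω) ∂P - ∫ ω, F (dualQ N x (X ω) (Λ ω) + Z ω) ∂P| ≤
      (L : ℝ) * ∫ ω, |X ω - dualQ N x (X ω) (Λ ω)| ^ 2 ∂P :=
  dualQ_second_order_shift_general P a b N x hmono hx0 hxN X hXmeas hXab Λ hΛmeas hΛ hindepXΛ Z
    hZmeas hZ2 hindepZ F L hF hFlip
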